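/- Let F be a functor from separable real C*-algebras to abelian groups that is homotopy invariant and half exact. Then F is split exact: every split short exact sequence 0 → A → B → C → 0 of separable real C*-algebras induces a split short exact sequence 0 → F(A) → F(B) → F(C) → 0. -/

import Mathlib

noncomputable section
open scoped unitInterval
open CategoryTheory

structure SepRCStar : Type 1 where
  carrier : Type
  [instNUNR : NonUnitalNormedRing carrier]
  [instStar : StarRing carrier]
  [instCStar : CStarRing carrier]
  [instNS : NormedSpace ℝ carrier]
  [instIST : IsScalarTower ℝ carrier carrier]
  [instSMCC : SMulCommClass ℝ carrier carrier]
  [instSM : StarModule ℝ carrier]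
  [instComplete : CompleteSpace carrier]
  [instSep : TopologicalSpace.SeparableSpace carrier]

attribute [instance] SepRCStar.instNUNR SepRCStar.instStar SepRCStar.instCStar
  SepRCStar.instNS SepRCStar.instIST SepRCStar.instSMCC SepRCStar.instSM
  SepRCStar.instComplete SepRCStar.instSep

instance : CoeSort SepRCStar Type := ⟨SepRCStar.carrier⟩

def RR : SepRCStar := ⟨ℝ⟩

def Cyl (B : SepRCStar) : SepRCStar :=
  @SepRCStar.mk C(I, B) _ _ _ _ _ _ _ _
    (by
      have : SecondCountableTopology B.carrier :=
        UniformSpace.secondCountable_of_separable B.carrier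
      infer_instance)

/-- A morphism of real C*-algebras: a continuous (bounded) real *-homomorphism. -/
structure RCHom (A B : SepRCStar) extends A →⋆ₙₐ[ℝ] B where
  cont : Continuous toNonUnitalStarAlgHom

instance {A B : SepRCStar} : FunLike (RCHom A B) A B where
  coe f := f.toNonUnitalStarAlgHom
  coe_injective f g h := by
    cases f; cases g
    simp only [RCHom.mk.injEq]
    exact DFunLike.coe_injective h

@[ext] theorem RCHom.ext {A B : SepRCStar} {f g : RCHom A B} (h : ∀ x, f x = g x) : f = g :=
  DFunLike.ext _ _ h

instance : Category SepRCStar where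
  Hom A B := RCHom A B
  id A := ⟨NonUnitalStarAlgHom.id ℝ A, continuous_id⟩
  comp f g := ⟨g.toNonUnitalStarAlgHom.comp f.toNonUnitalStarAlgHom, g.cont.comp f.cont⟩
  id_comp f := by apply RCHom.ext; intro x; rfl
  comp_id f := by apply RCHom.ext; intro x; rfl
  assoc f g h := by apply RCHom.ext; intro x; rfl

instance {A B : SepRCStar} : FunLike (A ⟶ B) A B :=
  inferInstanceAs (FunLike (RCHom A B) A B)

/-- evaluation at a point of the cylinder, as a morphism -/
def evC (B : SepRCStar) (t : I) : Cyl B ⟶ B where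
  toFun f := (show C(I, B.carrier) from f) t
  map_smul' _ _ := rfl
  map_zero' := rfl
  map_add' _ _ := rfl
  map_mul' _ _ := rfl
  map_star' _ := rfl
  cont := show Continuous (fun f : C(I, B.carrier) => f t) from
    ContinuousEvalConst.continuous_eval_const t

/-- Two morphisms are homotopic if they are connected by a path of morphisms,
i.e. by a morphism into the cylinder algebra `C([0,1], B)`. -/
def Homotopic {A B : SepRCStar} (f g : A ⟶ B) : Prop :=
  ∃ H : A ⟶ Cyl B, H ≫ evC B 0 = f ∧ H ≫ evC B 1 = g

/-! ### Functors from separable real C*-algebras to abelian groups -/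

/-- A functor from separable real C*-algebras to abelian groups. -/
abbrev AbFun := SepRCStar ⥤ AddCommGrpCat.{0}

/-- `F` is homotopy invariant if homotopic *-homomorphisms induce equal maps. -/
def HomotopyInvariant (F : AbFun) : Prop :=
  ∀ {A B : SepRCStar} (f g : A ⟶ B), Homotopic f g → F.map f = F.map g

/-- The data of the stabilization functor `A ↦ K ⊗ A` together with the corner
inclusion `A → K ⊗ A` induced by a rank-one projection. -/
structure StabData : Type 1 where
  stab : SepRCStar → SepRCStar
  incl : ∀ A : SepRCStar, A ⟶ stab A

/-- `F` is stable if the corner inclusion `A → K ⊗ A` induces an isomorphism. -/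
def Stable (St : StabData) (F : AbFun) : Prop :=
  ∀ A : SepRCStar, Function.Bijective (F.map (St.incl A))

/-- A short exact sequence `0 → A → B → C → 0` of separable real C*-algebras. -/
structure SES : Type 1 where
  fst : SepRCStar
  snd : SepRCStar
  trd : SepRCStar
  f : fst ⟶ snd
  g : snd ⟶ trd
  inj : Function.Injective ⇑f
  surj : Function.Surjective ⇑g
  exactness : ∀ b, g b = 0 ↔ b ∈ Set.range ⇑f

/-- A split short exact sequence. -/
def SES.IsSplit (E : SES) : Prop := ∃ s : E.trd ⟶ E.snd, s ≫ E.g = 𝟙 E.trd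

/-- `F` is half exact if every short exact sequence induces an exact sequence
`F(A) → F(B) → F(C)`. -/
def HalfExact (F : AbFun) : Prop :=
  ∀ E : SES, Function.Exact (F.map E.f) (F.map E.g)

/-- `F` is split exact if every split short exact sequence induces a split short
exact sequence `0 → F(A) → F(B) → F(C) → 0` of abelian groups. -/
def SplitExactF (F : AbFun) : Prop :=
  ∀ E : SES, E.IsSplit →
    Function.Injective (F.map E.f) ∧ Function.Surjective (F.map E.g) ∧
    Function.Exact (F.map E.f) (F.map E.g) ∧
    ∃ sec : F.obj E.trd ⟶ F.obj E.snd, sec ≫ F.map E.g = 𝟙 (F.obj E.trd)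

/-! ### An axiomatization of (graded) Kasparov KK-theory for real C*-algebras -/

/-- The data and formal properties of graded real KK-theory:  abelian groups
`KK_n(A,B)`, classes `[f] ∈ KK_0(A,B)` of morphisms, and the associative
bilinear Kasparov intersection product, which is homotopy invariant. -/
structure GKK : Type 2 where
  KK : ℤ → SepRCStar → SepRCStar → Type
  [instAdd : ∀ n A B, AddCommGroup (KK n A B)]
  kkOf : ∀ {A B : SepRCStar}, (A ⟶ B) → KK 0 A B
  comp : ∀ {m n : ℤ} {A B C : SepRCStar}, KK m A B → KK n B C → KK (m + n) A C
  comp_add_left : ∀ {m n : ℤ} {A B C : SepRCStar} (x y : KK m A B) (z : KK n B C),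
    comp (x + y) z = comp x z + comp y z
  comp_add_right : ∀ {m n : ℤ} {A B C : SepRCStar} (x : KK m A B) (y z : KK n B C),
    comp x (y + z) = comp x y + comp x z
  comp_assoc : ∀ {m n k : ℤ} {A B C D : SepRCStar} (x : KK m A B) (y : KK n B C) (z : KK k C D),
    HEq (comp (comp x y) z) (comp x (comp y z))
  comp_one : ∀ {m : ℤ} {A B : SepRCStar} (x : KK m A B), HEq (comp x (kkOf (𝟙 B))) x
  one_comp : ∀ {m : ℤ} {A B : SepRCStar} (x : KK m A B), HEq (comp (kkOf (𝟙 A)) x) x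
  kkOf_comp : ∀ {A B C : SepRCStar} (f : A ⟶ B) (g : B ⟶ C),
    HEq (kkOf (f ≫ g)) (comp (kkOf f) (kkOf g))
  kkOf_htpy : ∀ {A B : SepRCStar} (f g : A ⟶ B), Homotopic f g → kkOf f = kkOf g

attribute [instance] GKK.instAdd

namespace GKK

variable (K : GKK)

/-- transport along an equality of degrees -/
def castK {m m' : ℤ} {A B : SepRCStar} (h : m = m') (x : K.KK m A B) : K.KK m' A B :=
  cast (congrArg (fun i => K.KK i A B) h) x

/-- the Kasparov product, normalized to a specified degree -/
def cmp {m n k : ℤ} {A B C : SepRCStar} (h : m + n = k) (x : K.KK m A B) (y : K.KK n B C) :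
    K.KK k A C :=
  K.castK h (K.comp x y)

/-- the (degree-zero) Kasparov product -/
def comp0 {A B C : SepRCStar} (x : K.KK 0 A B) (y : K.KK 0 B C) : K.KK 0 A C :=
  K.cmp (add_zero 0) x y

/-- pullback of a KK-element along a morphism -/
def pull {n : ℤ} {A' A B : SepRCStar} (f : A' ⟶ A) (y : K.KK n A B) : K.KK n A' B :=
  K.cmp (zero_add n) (K.kkOf f) y

/-- pushforward of a KK-element along a morphism -/
def push {n : ℤ} {A B B' : SepRCStar} (g : B ⟶ B') (y : K.KK n A B) : K.KK n A B' :=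
  K.cmp (add_zero n) y (K.kkOf g)

/-- `A` and `B` are KK-equivalent. -/
def KKEquivalent (A B : SepRCStar) : Prop :=
  ∃ (x : K.KK 0 A B) (y : K.KK 0 B A),
    K.comp0 x y = K.kkOf (𝟙 A) ∧ K.comp0 y x = K.kkOf (𝟙 B)

end GKK

/-! ### Suspensions -/

/-- The data of the suspension functor `SA = C₀(ℝ, A)` and the inverse suspension
functor `S⁻¹A = { f ∈ C₀(ℝ, ℂ ⊗ A) : f(-x) = conj (f x) }`. -/
structure SuspData : Type 1 where
  susp : SepRCStar → SepRCStar
  isusp : SepRCStar → SepRCStar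
  suspMap : ∀ {A B : SepRCStar}, (A ⟶ B) → (susp A ⟶ susp B)
  isuspMap : ∀ {A B : SepRCStar}, (A ⟶ B) → (isusp A ⟶ isusp B)
  suspMap_id : ∀ A : SepRCStar, suspMap (𝟙 A) = 𝟙 (susp A)
  isuspMap_id : ∀ A : SepRCStar, isuspMap (𝟙 A) = 𝟙 (isusp A)
  suspMap_comp : ∀ {A B C : SepRCStar} (f : A ⟶ B) (g : B ⟶ C),
    suspMap (f ≫ g) = suspMap f ≫ suspMap g
  isuspMap_comp : ∀ {A B C : SepRCStar} (f : A ⟶ B) (g : B ⟶ C),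
    isuspMap (f ≫ g) = isuspMap f ≫ isuspMap g

namespace SuspData

/-- iterated suspension -/
def npow (S : SuspData) : ℕ → SepRCStar → SepRCStar
  | 0, A => A
  | k+1, A => npow S k (S.susp A)

/-- iterated inverse suspension -/
def inpow (S : SuspData) : ℕ → SepRCStar → SepRCStar
  | 0, A => A
  | k+1, A => inpow S k (S.isusp A)

/-- `SⁿA` for `n ∈ ℤ`. -/
def pow (S : SuspData) : ℤ → SepRCStar → SepRCStar
  | Int.ofNat k, A => npow S k A
  | Int.negSucc k, A => inpow S (k+1) A

def npowMap (S : SuspData) : ∀ (k : ℕ) {A B : SepRCStar}, (A ⟶ B) → (npow S k A ⟶ npow S k B)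
  | 0, _, _, f => f
  | k+1, _, _, f => npowMap S k (S.suspMap f)

def inpowMap (S : SuspData) : ∀ (k : ℕ) {A B : SepRCStar}, (A ⟶ B) → (inpow S k A ⟶ inpow S k B)
  | 0, _, _, f => f
  | k+1, _, _, f => inpowMap S k (S.isuspMap f)

/-- `Sⁿf` for `n ∈ ℤ`. -/
def powMap (S : SuspData) : ∀ (n : ℤ) {A B : SepRCStar}, (A ⟶ B) → (pow S n A ⟶ pow S n B)
  | Int.ofNat k, _, _, f => npowMap S k f
  | Int.negSucc k, _, _, f => inpowMap S (k+1) f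

theorem npowMap_id (S : SuspData) : ∀ (k : ℕ) (A : SepRCStar),
    npowMap S k (𝟙 A) = 𝟙 (npow S k A)
  | 0, _ => rfl
  | k+1, A => by rw [npowMap, S.suspMap_id, npowMap_id S k]; rfl

theorem inpowMap_id (S : SuspData) : ∀ (k : ℕ) (A : SepRCStar),
    inpowMap S k (𝟙 A) = 𝟙 (inpow S k A)
  | 0, _ => rfl
  | k+1, A => by rw [inpowMap, S.isuspMap_id, inpowMap_id S k]; rfl

theorem npowMap_comp (S : SuspData) : ∀ (k : ℕ) {A B C : SepRCStar} (f : A ⟶ B) (g : B ⟶ C),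
    npowMap S k (f ≫ g) = npowMap S k f ≫ npowMap S k g
  | 0, _, _, _, _, _ => rfl
  | k+1, A, B, C, f, g => by rw [npowMap, S.suspMap_comp, npowMap_comp S k]; rfl

theorem inpowMap_comp (S : SuspData) : ∀ (k : ℕ) {A B C : SepRCStar} (f : A ⟶ B) (g : B ⟶ C),
    inpowMap S k (f ≫ g) = inpowMap S k f ≫ inpowMap S k g
  | 0, _, _, _, _, _ => rfl
  | k+1, A, B, C, f, g => by rw [inpowMap, S.isuspMap_comp, inpowMap_comp S k]; rfl

/-- `Sⁿ` as a functor. -/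
def powFun (S : SuspData) (n : ℤ) : SepRCStar ⥤ SepRCStar where
  obj := pow S n
  map := powMap S n
  map_id A := by cases n with
    | ofNat k => exact npowMap_id S k A
    | negSucc k => exact inpowMap_id S (k+1) A
  map_comp f g := by cases n with
    | ofNat k => exact npowMap_comp S k f g
    | negSucc k => exact inpowMap_comp S (k+1) f g

end SuspData

/-- transport of elements of `F` along an equality of algebras -/
def castF (F : AbFun) {X Y : SepRCStar} (h : X = Y) (x : F.obj X) : F.obj Y :=
  cast (congrArg (fun Z => ((F.obj Z : Type))) h) x

/-- `F` is continuous: it preserves countable inductive limits (colimits of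
sequences) of separable real C*-algebras, in every degree. -/
def ContinuousFun (S : SuspData) (F : AbFun) : Prop :=
  ∀ (D : ℕ ⥤ SepRCStar) (c : CategoryTheory.Limits.Cocone D),
    Nonempty (CategoryTheory.Limits.IsColimit c) →
    ∀ n : ℤ, Nonempty (CategoryTheory.Limits.IsColimit ((S.powFun n ⋙ F).mapCocone c))

/-! ### Pairings between a functor and KK-theory -/

/-- An (ungraded) pairing `F(A) ⊗ KK(A,B) → F(B)`. -/
def UPairing (K : GKK) (F : AbFun) : Type 1 :=
  ∀ (A B : SepRCStar), F.obj A → K.KK 0 A B → F.obj B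

/-- The conditions for `α` to be a natural (bi-additive) pairing with `α(x ⊗ 1_A) = x`. -/
structure IsUPairing (K : GKK) (F : AbFun) (α : UPairing K F) : Prop where
  add_left : ∀ A B (x y : F.obj A) (z : K.KK 0 A B), α A B (x + y) z = α A B x z + α A B y z
  add_right : ∀ A B (x : F.obj A) (z w : K.KK 0 A B),
    α A B x (z + w) = α A B x z + α A B x w
  natA : ∀ (A' A B : SepRCStar) (f : A' ⟶ A) (x : F.obj A') (y : K.KK 0 A B),
    α A B (F.map f x) y = α A' B x (K.pull f y)
  natB : ∀ (A B B' : SepRCStar) (g : B ⟶ B') (x : F.obj A) (y : K.KK 0 A B),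
    α A B' x (K.push g y) = F.map g (α A B x y)
  unit : ∀ A (x : F.obj A), α A A x (K.kkOf (𝟙 A)) = x

/-- A graded pairing `F_*(A) ⊗ KK_*(A,B) → F_*(B)`, where `F_n(A) = F(SⁿA)` and
`KK_n(A,B)` is graded KK-theory. -/
def GPairing (K : GKK) (S : SuspData) (F : AbFun) : Type 1 :=
  ∀ (m n : ℤ) (A B : SepRCStar), F.obj (S.pow m A) → K.KK n A B → F.obj (S.pow (m + n) B)

/-- The conditions for a graded pairing to be natural, bi-additive, unital and
associative for the Kasparov product. -/
structure IsGPairing (K : GKK) (S : SuspData) (F : AbFun) (α : GPairing K S F) : Prop where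
  add_left : ∀ m n A B (x y : F.obj (S.pow m A)) (z : K.KK n A B),
    α m n A B (x + y) z = α m n A B x z + α m n A B y z
  add_right : ∀ m n A B (x : F.obj (S.pow m A)) (z w : K.KK n A B),
    α m n A B x (z + w) = α m n A B x z + α m n A B x w
  natA : ∀ m n (A' A B : SepRCStar) (f : A' ⟶ A) (x : F.obj (S.pow m A')) (y : K.KK n A B),
    α m n A B (F.map (S.powMap m f) x) y = α m n A' B x (K.pull f y)
  natB : ∀ m n (A B B' : SepRCStar) (g : B ⟶ B') (x : F.obj (S.pow m A)) (y : K.KK n A B),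
    α m n A B' x (K.push g y) = F.map (S.powMap (m + n) g) (α m n A B x y)
  unit : ∀ m A (x : F.obj (S.pow m A)), HEq (α m 0 A A x (K.kkOf (𝟙 A))) x
  assoc : ∀ m n k (A B C : SepRCStar) (x : F.obj (S.pow m A)) (y : K.KK n A B) (z : K.KK k B C),
    HEq (α (m + n) k B C (α m n A B x y) z) (α m (n + k) A C x (K.comp y z))

/-- the action of a graded KK-element on `F_*`, normalized to a specified degree -/
def actF {K : GKK} {S : SuspData} {F : AbFun} (α : GPairing K S F) {n d k : ℤ}
    {B C : SepRCStar} (y : K.KK d B C) (h : n + d = k) (x : F.obj (S.pow n B)) :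
    F.obj (S.pow k C) :=
  castF F (congrArg (fun i => S.pow i C) h) (α n d B C x y)

/-!
Let `g : B → C` be split by `s`. By the open mapping theorem `A ≅ ker g`, so it suffices that
`F(ker g) → F(B)` is injective. Let `D` be the algebra of paths in `B` ending in `ker g`.
Evaluation at `0` maps `D` onto `B` (the path `t ↦ b - t • s (g b)` uses the splitting) with
kernel the algebra `N` of paths from `0` into `ker g`, and evaluation at `1` retracts the
constant paths `ker g → D`; so it suffices that `F` kills `N → D → ker g`. Composing with `g`
maps `N` onto the loops in `C`, with kernel the cone on `ker g`, which `F` kills because the cone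
is contractible. Hence `F(N) → F(loops)` is injective and inverted by `F(s ∘ -)`, and the lifted
loops end at `s 0 = 0`, so `N → ker g` induces zero.
-/

namespace SepRCStar

instance {A B : SepRCStar} : NonUnitalAlgHomClass (A ⟶ B) ℝ A B where
  map_add f := f.toNonUnitalStarAlgHom.map_add
  map_zero f := f.toNonUnitalStarAlgHom.map_zero
  map_mul f := f.toNonUnitalStarAlgHom.map_mul
  map_smulₛₗ f := f.toNonUnitalStarAlgHom.map_smul

instance {A B : SepRCStar} : StarHomClass (A ⟶ B) A B where
  map_star f := map_star f.toNonUnitalStarAlgHom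

instance {A B : SepRCStar} : ContinuousMapClass (A ⟶ B) A B where
  map_continuous f := f.cont

@[ext] theorem hom_ext {A B : SepRCStar} {φ ψ : A ⟶ B} (h : ∀ a, φ a = ψ a) : φ = ψ :=
  RCHom.ext h

@[simp] theorem comp_apply {A B C : SepRCStar} (φ : A ⟶ B) (ψ : B ⟶ C) (a : A) :
    (φ ≫ ψ) a = ψ (φ a) := rfl

@[simp] theorem id_apply {A : SepRCStar} (a : A) : (𝟙 A : A ⟶ A) a = a := rfl

instance {A B : SepRCStar} : Zero (A ⟶ B) := ⟨⟨0, continuous_const⟩⟩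

@[simp] theorem zero_apply {A B : SepRCStar} (a : A) : (0 : A ⟶ B) a = 0 := rfl

theorem isIso_of_bijective {A B : SepRCStar} (φ : A ⟶ B) (hφ : Function.Bijective φ) :
    IsIso φ := by
  let e := StarAlgEquiv.ofBijective φ hφ
  let L : A →L[ℝ] B := { (φ : A →ₗ[ℝ] B) with cont := map_continuous φ }
  have he : Continuous e.symm :=
    (e.toEquiv.toHomeomorphOfContinuousOpen (map_continuous φ) (L.isOpenMap hφ.2)).continuous_symm
  refine ⟨⟨⟨(e.symm : B →⋆ₙₐ[ℝ] A), he⟩, ?_, ?_⟩⟩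
  · ext a
    exact e.symm_apply_apply a
  · ext b
    exact e.apply_symm_apply b

section ClosedSubalgebra

variable {X : SepRCStar} (S : NonUnitalStarSubalgebra ℝ X) (hS : IsClosed (S : Set X))

def ofClosed : SepRCStar :=
  letI : CStarRing S := ⟨fun x => CStarRing.norm_mul_self_le (x : X)⟩
  letI : CompleteSpace S := hS.completeSpace_coe
  haveI : SecondCountableTopology X := UniformSpace.secondCountable_of_separable X
  ⟨S⟩

def ofClosedι : ofClosed S hS ⟶ X :=
  ⟨NonUnitalStarSubalgebraClass.subtype S, continuous_subtype_val⟩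

@[simp] theorem ofClosedι_apply (x : ofClosed S hS) : ofClosedι S hS x = x.1 := rfl

theorem ofClosedι_injective : Function.Injective (ofClosedι S hS) :=
  Subtype.val_injective

variable {S hS}

theorem continuous_ofClosed_iff {Z : Type*} [TopologicalSpace Z] (f : Z → ofClosed S hS) :
    Continuous f ↔ Continuous (ofClosedι S hS ∘ f) :=
  Topology.IsInducing.subtypeVal.continuous_iff

def codRestrict {A : SepRCStar} (φ : A ⟶ X) (h : ∀ a, φ a ∈ S) : A ⟶ ofClosed S hS :=
  ⟨NonUnitalStarAlgHom.codRestrict φ.toNonUnitalStarAlgHom S h, φ.cont.subtype_mk h⟩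

theorem codRestrict_injective {A : SepRCStar} {φ : A ⟶ X} (h : ∀ a, φ a ∈ S)
    (hφ : Function.Injective φ) : Function.Injective (codRestrict (hS := hS) φ h) :=
  fun _ _ hab => hφ (congrArg Subtype.val hab)

end ClosedSubalgebra

def ker {A B : SepRCStar} (φ : A ⟶ B) : NonUnitalStarSubalgebra ℝ A :=
  NonUnitalStarAlgHom.equalizer φ 0

@[simp] theorem mem_ker {A B : SepRCStar} (φ : A ⟶ B) (a : A) : a ∈ ker φ ↔ φ a = 0 := Iff.rfl

theorem isClosed_ker {A B : SepRCStar} (φ : A ⟶ B) : IsClosed (ker φ : Set A) :=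
  isClosed_eq (map_continuous φ) continuous_const

theorem isClosed_ker_inf_ker {A B C : SepRCStar} (φ : A ⟶ B) (ψ : A ⟶ C) :
    IsClosed ((ker φ ⊓ ker ψ : NonUnitalStarSubalgebra ℝ A) : Set A) := by
  rw [NonUnitalStarAlgebra.coe_inf]
  exact (isClosed_ker φ).inter (isClosed_ker ψ)

def zero : SepRCStar := ofClosed (X := RR) ⊥ (by simp)

theorem zero_eq_zero (x : zero) : x = 0 := Subtype.ext (NonUnitalStarAlgebra.mem_bot.mp x.2)

def zeroSES : SES where
  fst := zero
  snd := zero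
  trd := zero
  f := 𝟙 zero
  g := 𝟙 zero
  inj _ _ h := h
  surj x := ⟨x, rfl⟩
  exactness b := ⟨fun _ => ⟨b, rfl⟩, fun _ => zero_eq_zero _⟩

instance (X : SepRCStar) : FunLike (Cyl X) I X := inferInstanceAs (FunLike C(I, X) I X)

instance (X : SepRCStar) : ContinuousEval (Cyl X) I X :=
  inferInstanceAs (ContinuousEval C(I, X) I X)

theorem Cyl.ext {X : SepRCStar} {h h' : Cyl X} (H : ∀ t, h t = h' t) : h = h' :=
  ContinuousMap.ext H

@[simp] theorem evC_apply {X : SepRCStar} (t : I) (h : Cyl X) : evC X t h = h t := rfl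

def Cyl.map {X Y : SepRCStar} (φ : X ⟶ Y) : Cyl X ⟶ Cyl Y where
  toFun h := (⟨φ, map_continuous φ⟩ : C(X, Y)).comp h
  map_smul' r h := Cyl.ext fun t => map_smul φ r (h t)
  map_zero' := Cyl.ext fun _ => map_zero φ
  map_add' h h' := Cyl.ext fun t => map_add φ (h t) (h' t)
  map_mul' h h' := Cyl.ext fun t => map_mul φ (h t) (h' t)
  map_star' h := Cyl.ext fun t => map_star φ (h t)
  cont := ContinuousMap.continuous_postcomp _

@[simp] theorem Cyl.map_apply {X Y : SepRCStar} (φ : X ⟶ Y) (h : Cyl X) (t : I) :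
    Cyl.map φ h t = φ (h t) := rfl

theorem Cyl.map_injective {X Y : SepRCStar} {φ : X ⟶ Y} (hφ : Function.Injective φ) :
    Function.Injective (Cyl.map φ) :=
  fun _ _ h => Cyl.ext fun t => hφ (congrArg (· t) h)

def Cyl.const (X : SepRCStar) : X ⟶ Cyl X where
  toFun x := ContinuousMap.const I x
  map_smul' _ _ := rfl
  map_zero' := rfl
  map_add' _ _ := rfl
  map_mul' _ _ := rfl
  map_star' _ := rfl
  cont := ContinuousMap.continuous_const'

def Cyl.precomp (X : SepRCStar) (c : C(I, I)) : Cyl X ⟶ Cyl X where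
  toFun h := (h : C(I, X)).comp c
  map_smul' _ _ := rfl
  map_zero' := rfl
  map_add' _ _ := rfl
  map_mul' _ _ := rfl
  map_star' _ := rfl
  cont := ContinuousMap.continuous_precomp c

def pathOfContinuous {A B : SepRCStar} (H : I → (A ⟶ B))
    (hH : Continuous fun p : I × A => H p.1 p.2) : A ⟶ Cyl B where
  toFun a := (⟨fun u => H u a, hH.comp (Continuous.prodMk_left a)⟩ : C(I, B))
  map_smul' r a := Cyl.ext fun u => map_smul (H u) r a
  map_zero' := Cyl.ext fun u => map_zero (H u)
  map_add' a b := Cyl.ext fun u => map_add (H u) a b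
  map_mul' a b := Cyl.ext fun u => map_mul (H u) a b
  map_star' a := Cyl.ext fun u => map_star (H u) a
  cont := ContinuousMap.continuous_of_continuous_uncurry _ (hH.comp continuous_swap)

theorem homotopic_of_continuous {A B : SepRCStar} (H : I → (A ⟶ B))
    (hH : Continuous fun p : I × A => H p.1 p.2) : Homotopic (H 0) (H 1) :=
  ⟨pathOfContinuous H hH, rfl, rfl⟩

abbrev Cone (X : SepRCStar) : SepRCStar := ofClosed (ker (evC X 0)) (isClosed_ker _)

abbrev Loop (X : SepRCStar) : SepRCStar :=
  ofClosed (ker (evC X 0) ⊓ ker (evC X 1)) (isClosed_ker_inf_ker _ _)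

def Cone.shrink (X : SepRCStar) (u : I) : Cone X ⟶ Cone X :=
  codRestrict (ofClosedι _ _ ≫ Cyl.precomp X ⟨(σ u * ·), by fun_prop⟩)
    (fun h => by show h.1 (σ u * 0) = 0; simpa using h.2)

theorem Cone.homotopic_id_zero (X : SepRCStar) : Homotopic (𝟙 (Cone X)) 0 := by
  have hH : Continuous fun p : I × Cone X => Cone.shrink X p.1 p.2 := by
    refine (continuous_ofClosed_iff _).2 (ContinuousMap.continuous_of_continuous_uncurry _ ?_)
    have hσ : Continuous fun q : I × I => σ q.1 * q.2 := by fun_prop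
    exact ContinuousEval.continuous_eval.comp
      (((map_continuous (ofClosedι _ _)).comp (continuous_snd.comp continuous_fst)).prodMk
        (hσ.comp ((continuous_fst.comp continuous_fst).prodMk continuous_snd)))
  convert homotopic_of_continuous _ hH
  · ext h
    exact Subtype.ext (Cyl.ext fun t => show h.1 t = h.1 (σ 0 * t) by simp)
  · ext h
    exact Subtype.ext (Cyl.ext fun t => show 0 = h.1 (σ 1 * t) by simpa using h.2.symm)

section SplitSurjection

variable {B C : SepRCStar} (g : B ⟶ C)

abbrev Ker : SepRCStar := ofClosed (ker g) (isClosed_ker g)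

def kerι : Ker g ⟶ B := ofClosedι _ _

@[simp] theorem map_kerι_apply (a : Ker g) : g (kerι g a) = 0 := a.2

abbrev PathsToKer : SepRCStar := ofClosed (ker (evC B 1 ≫ g)) (isClosed_ker _)

abbrev PathsZeroToKer : SepRCStar :=
  ofClosed (ker (evC B 0) ⊓ ker (evC B 1 ≫ g)) (isClosed_ker_inf_ker _ _)

def PathsToKer.const : Ker g ⟶ PathsToKer g :=
  codRestrict (kerι g ≫ Cyl.const B) fun a => a.2

def PathsToKer.ev0 : PathsToKer g ⟶ B := ofClosedι _ _ ≫ evC B 0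

def PathsToKer.ev1 : PathsToKer g ⟶ Ker g := codRestrict (ofClosedι _ _ ≫ evC B 1) fun h => h.2

theorem PathsToKer.const_ev0 : const g ≫ ev0 g = kerι g := rfl

theorem PathsToKer.const_ev1 : const g ≫ ev1 g = 𝟙 _ := rfl

def PathsZeroToKer.incl : PathsZeroToKer g ⟶ PathsToKer g :=
  codRestrict (ofClosedι _ _) fun h => h.2.2

def PathsZeroToKer.toLoop : PathsZeroToKer g ⟶ Loop C :=
  codRestrict (ofClosedι _ _ ≫ Cyl.map g) fun h => by have := h.2; simp_all

def PathsZeroToKer.ofLoop (s : C ⟶ B) : Loop C ⟶ PathsZeroToKer g :=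
  codRestrict (ofClosedι _ _ ≫ Cyl.map s) fun ℓ => by have := ℓ.2; simp_all

def PathsZeroToKer.ofCone : Cone (Ker g) ⟶ PathsZeroToKer g :=
  codRestrict (ofClosedι _ _ ≫ Cyl.map (kerι g)) fun h => by have := h.2; simp_all

variable {g} {s : C ⟶ B}

theorem PathsZeroToKer.ofLoop_toLoop (hs : s ≫ g = 𝟙 C) : ofLoop g s ≫ toLoop g = 𝟙 _ := by
  ext ℓ
  exact Subtype.ext (Cyl.ext fun t => DFunLike.congr_fun hs (ℓ.1 t))

theorem PathsZeroToKer.ofLoop_incl_ev1 : ofLoop g s ≫ incl g ≫ PathsToKer.ev1 g = 0 := by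
  ext ℓ
  exact Subtype.ext (show s (ℓ.1 1) = 0 by rw [show ℓ.1 1 = 0 from ℓ.2.2, map_zero])

def PathsToKer.evalZeroSES (hs : s ≫ g = 𝟙 C) : SES where
  fst := PathsZeroToKer g
  snd := PathsToKer g
  trd := B
  f := PathsZeroToKer.incl g
  g := ev0 g
  inj := codRestrict_injective _ (ofClosedι_injective _ _)
  surj b := by
    refine ⟨⟨⟨fun t => b - (t : ℝ) • s (g b), by fun_prop⟩, ?_⟩, ?_⟩
    · show g (b - ((1 : I) : ℝ) • s (g b)) = 0
      simpa [sub_eq_zero] using (DFunLike.congr_fun hs (g b)).symm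
    · show b - ((0 : I) : ℝ) • s (g b) = b
      simp
  exactness h := ⟨fun h0 => ⟨⟨h.1, h0, h.2⟩, rfl⟩, by rintro ⟨k, rfl⟩; exact k.2.1⟩

def PathsZeroToKer.coneSES (hs : s ≫ g = 𝟙 C) : SES where
  fst := Cone (Ker g)
  snd := PathsZeroToKer g
  trd := Loop C
  f := ofCone g
  g := toLoop g
  inj := codRestrict_injective _
    ((Cyl.map_injective (ofClosedι_injective _ _)).comp (ofClosedι_injective _ _))
  surj ℓ := ⟨ofLoop g s ℓ, DFunLike.congr_fun (ofLoop_toLoop hs) ℓ⟩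
  exactness h := by
    refine ⟨fun h0 => ?_, ?_⟩
    · have hg (t : I) : g (h.1 t) = 0 := congrArg (fun ℓ : Loop C => ℓ.1 t) h0
      exact ⟨⟨⟨fun t => ⟨h.1 t, hg t⟩, (map_continuous h.1).subtype_mk _⟩, Subtype.ext h.2.1⟩, rfl⟩
    · rintro ⟨k, rfl⟩
      exact Subtype.ext (Cyl.ext fun t => (k.1 t).2)

end SplitSurjection

def _root_.SES.toKer (E : SES) : E.fst ⟶ Ker E.g :=
  codRestrict E.f fun a => (E.exactness _).2 ⟨a, rfl⟩

theorem _root_.SES.toKer_kerι (E : SES) : E.toKer ≫ kerι E.g = E.f := rfl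

instance _root_.SES.isIso_toKer (E : SES) : IsIso E.toKer :=
  isIso_of_bijective _ ⟨codRestrict_injective _ E.inj,
    fun b => ((E.exactness b.1).1 b.2).imp fun _ ha => Subtype.ext ha⟩

end SepRCStar

open SepRCStar

section HalfExactFunctor

variable {F : AbFun}

theorem HalfExact.eq_zero_of_zero (hF : HalfExact F) (x : F.obj zero) : x = 0 := by
  have h := (hF zeroSES x).2 ⟨x, by simp [zeroSES]; rfl⟩
  simp only [zeroSES, F.map_id] at h
  exact h

theorem HalfExact.map_zero_apply (hF : HalfExact F) {X Y : SepRCStar} (x : F.obj X) :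
    F.map (0 : X ⟶ Y) x = 0 := by
  rw [show (0 : X ⟶ Y) = (0 : X ⟶ zero) ≫ (0 : zero ⟶ Y) from rfl, F.map_comp_apply,
    hF.eq_zero_of_zero (F.map 0 x), map_zero]

theorem HalfExact.map_injective_of_eq_zero (hF : HalfExact F) (E : SES)
    (h : ∀ x : F.obj E.fst, x = 0) : Function.Injective (F.map E.g) := by
  rw [injective_iff_map_eq_zero]
  intro y hy
  obtain ⟨x, rfl⟩ := (hF E y).1 hy
  rw [h x, map_zero]

theorem eq_zero_of_cone (hhtpy : HomotopyInvariant F) (hF : HalfExact F) {X : SepRCStar}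
    (x : F.obj (Cone X)) : x = 0 := by
  simpa [← hhtpy _ _ (Cone.homotopic_id_zero X)] using hF.map_zero_apply (Y := Cone X) x

variable {B C : SepRCStar} {g : B ⟶ C} {s : C ⟶ B}

theorem map_incl_ev1_apply_eq_zero (hhtpy : HomotopyInvariant F) (hF : HalfExact F)
    (hs : s ≫ g = 𝟙 C) (w : F.obj (PathsZeroToKer g)) :
    F.map (PathsZeroToKer.incl g ≫ PathsToKer.ev1 g) w = 0 := by
  have hinj : Function.Injective (F.map (PathsZeroToKer.toLoop g)) :=
    hF.map_injective_of_eq_zero (PathsZeroToKer.coneSES hs) (eq_zero_of_cone hhtpy hF)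
  have hw : F.map (PathsZeroToKer.toLoop g ≫ PathsZeroToKer.ofLoop g s) w = w := hinj <| by
    rw [← F.map_comp_apply, Category.assoc, PathsZeroToKer.ofLoop_toLoop hs, Category.comp_id]
  rw [← hw, ← F.map_comp_apply, Category.assoc, PathsZeroToKer.ofLoop_incl_ev1,
    F.map_comp_apply, hF.map_zero_apply]

theorem map_kerι_injective (hhtpy : HomotopyInvariant F) (hF : HalfExact F)
    (hs : s ≫ g = 𝟙 C) : Function.Injective (F.map (kerι g)) := by
  rw [injective_iff_map_eq_zero]
  intro x hx
  obtain ⟨w, hw⟩ : ∃ w, F.map (PathsZeroToKer.incl g) w = F.map (PathsToKer.const g) x :=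
    (hF (PathsToKer.evalZeroSES hs) _).1 <| show F.map (PathsToKer.ev0 g) _ = 0 by
      rwa [← F.map_comp_apply, PathsToKer.const_ev0]
  calc x = F.map (PathsToKer.const g ≫ PathsToKer.ev1 g) x := by
        rw [PathsToKer.const_ev1, F.map_id]; rfl
    _ = F.map (PathsZeroToKer.incl g ≫ PathsToKer.ev1 g) w := by
        rw [F.map_comp_apply, F.map_comp_apply, ← hw]
    _ = 0 := map_incl_ev1_apply_eq_zero hhtpy hF hs w

end HalfExactFunctor

/-- **Corollary.**  A homotopy invariant, half exact functor on separable real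
C*-algebras is split exact. -/
theorem homotopyInvariant_halfExact_splitExact (F : AbFun)
    (hhtpy : HomotopyInvariant F) (hhalf : HalfExact F) :
    SplitExactF F := by
  rintro E ⟨s, hs⟩
  have hsec : F.map s ≫ F.map E.g = 𝟙 _ := by rw [← F.map_comp, hs, F.map_id]
  refine ⟨?_, fun c => ⟨F.map s c, congrArg (fun φ => φ c) hsec⟩, hhalf E, F.map s, hsec⟩
  rw [← E.toKer_kerι, F.map_comp, ConcreteCategory.coe_comp]
  exact (map_kerι_injective hhtpy hhalf hs).comp (ConcreteCategory.bijective_of_isIso _).1
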